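/- arXiv:1906.00455 — 6 statements merged into one kernel-verified Lean document; each statement's English description precedes it below -/
import Mathlib

section
/- For positive integers z·, c1, c2 and positive reals p, q with p ≠ q, the sum ∑_{z=0}^{z·} [Γ(z+c1)/z!] · [Γ(z·−z+c2)/(z·−z)!] · p^z · q^{z·−z} equals the mixed partial derivative (d^{c1−1}/dp^{c1−1})(d^{c2−1}/dq^{c2−1}) of [p^{c1−1} q^{z·+c2} − p^{z·+c1} q^{c2−1}]/(q − p). -/
/-!
Off the diagonal `q = p` the rational function is the polynomial
`∑_{z ≤ z·} p^(z + c₁ - 1) q^(z· - z + c₂ - 1)` (a shifted geometric sum), so near `(p, q)` the mixed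
derivative can be taken term by term, producing the falling factorials
`(z + c₁ - 1)_(c₁ - 1) = Γ(z + c₁) / z!` and `(z· - z + c₂ - 1)_(c₂ - 1) = Γ(z· - z + c₂) / (z· - z)!`.
-/

open Real Finset Filter Topology

theorem pow_mul_pow_sub_pow_mul_pow_div_sub {K : Type*} [Field K] {x y : K} (h : y ≠ x)
    (a b n : ℕ) :
    (x ^ a * y ^ (n + (b + 1)) - x ^ (n + (a + 1)) * y ^ b) / (y - x) =
      ∑ z ∈ range (n + 1), x ^ (z + a) * y ^ (n - z + b) := by
  rw [div_eq_iff (sub_ne_zero.mpr h)]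
  have hsum : ∑ z ∈ range (n + 1), x ^ (z + a) * y ^ (n - z + b) =
      (∑ z ∈ range (n + 1), x ^ z * y ^ (n + 1 - 1 - z)) * (x ^ a * y ^ b) := by
    rw [sum_mul]
    refine sum_congr rfl fun z _ => ?_
    rw [Nat.add_sub_cancel, pow_add, pow_add]
    ring
  rw [hsum]
  linear_combination (x ^ a * y ^ b) * geom_sum₂_mul x y (n + 1)

theorem iteratedDeriv_sum_mul_pow_add {𝕜 ι : Type*} [NontriviallyNormedField 𝕜] (s : Finset ι)
    (c : ι → 𝕜) (e : ι → ℕ) (k : ℕ) (x : 𝕜) :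
    iteratedDeriv k (fun y => ∑ i ∈ s, c i * y ^ (e i + k)) x =
      ∑ i ∈ s, c i * (e i + k).descFactorial k * x ^ e i := by
  rw [iteratedDeriv_fun_sum fun i _ => by fun_prop]
  refine sum_congr rfl fun i _ => ?_
  rw [iteratedDeriv_const_mul_field, iteratedDeriv_pow, Nat.add_sub_cancel, mul_assoc]

theorem Real.Gamma_natCast_add_succ_div_factorial (n k : ℕ) :
    Gamma (n + (k + 1 : ℕ)) / n.factorial = (n + k).descFactorial k := by
  rw [show ((n : ℝ) + (k + 1 : ℕ)) = (n + k : ℕ) + 1 by push_cast; ring,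
    Gamma_nat_eq_factorial, div_eq_iff (by positivity)]
  have := Nat.factorial_mul_descFactorial (Nat.le_add_left k n)
  rw [Nat.add_sub_cancel, mul_comm] at this
  exact_mod_cast this.symm

theorem stmt_0_general (zdot c₁ c₂ : ℕ) (hc₁ : 0 < c₁) (hc₂ : 0 < c₂)
    (p q : ℝ) (hpq : p ≠ q) :
    ∑ z ∈ Finset.range (zdot + 1),
      (Real.Gamma (z + c₁) / (Nat.factorial z)) *
        (Real.Gamma ((zdot - z : ℕ) + c₂) / (Nat.factorial (zdot - z))) *
          p ^ z * q ^ (zdot - z) =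
    iteratedDeriv (c₁ - 1)
      (fun p' : ℝ => iteratedDeriv (c₂ - 1)
        (fun q' : ℝ =>
          (p' ^ (c₁ - 1) * q' ^ (zdot + c₂) - p' ^ (zdot + c₁) * q' ^ (c₂ - 1)) / (q' - p')) q)
      p := by
  obtain ⟨a, rfl⟩ : ∃ a, c₁ = a + 1 := ⟨c₁ - 1, by omega⟩
  obtain ⟨b, rfl⟩ : ∃ b, c₂ = b + 1 := ⟨c₂ - 1, by omega⟩
  simp only [Nat.add_sub_cancel]
  have inner (p' : ℝ) (hp' : p' ≠ q) :
      iteratedDeriv b (fun q' => (p' ^ a * q' ^ (zdot + (b + 1)) -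
          p' ^ (zdot + (a + 1)) * q' ^ b) / (q' - p')) q =
        ∑ z ∈ range (zdot + 1), p' ^ (z + a) * (zdot - z + b).descFactorial b * q ^ (zdot - z) := by
    rw [← iteratedDeriv_sum_mul_pow_add]
    refine EventuallyEq.iteratedDeriv_eq _ ?_
    filter_upwards [isOpen_ne.mem_nhds hp'.symm] with q' hq'
    exact pow_mul_pow_sub_pow_mul_pow_div_sub hq' a b zdot
  have outer : (fun p' => iteratedDeriv b (fun q' => (p' ^ a * q' ^ (zdot + (b + 1)) -
        p' ^ (zdot + (a + 1)) * q' ^ b) / (q' - p')) q) =ᶠ[𝓝 p]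
      fun p' => ∑ z ∈ range (zdot + 1),
        ((zdot - z + b).descFactorial b * q ^ (zdot - z)) * p' ^ (z + a) := by
    filter_upwards [isOpen_ne.mem_nhds hpq] with p' hp'
    rw [inner p' hp']
    exact sum_congr rfl fun z _ => by ring
  rw [outer.iteratedDeriv_eq, iteratedDeriv_sum_mul_pow_add]
  refine sum_congr rfl fun z _ => ?_
  rw [Gamma_natCast_add_succ_div_factorial, Gamma_natCast_add_succ_div_factorial]
  ring

/-- Lemma 1: the normalizing sum of the two-group Poisson-gamma synthesizer equals a
mixed iterated partial derivative of a rational function, for `p, q > 0`, `p ≠ q`. -/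
theorem stmt_0 (zdot c₁ c₂ : ℕ) (hz : 0 < zdot) (hc₁ : 0 < c₁) (hc₂ : 0 < c₂)
    (p q : ℝ) (hp : 0 < p) (hq : 0 < q) (hpq : p ≠ q) :
    ∑ z ∈ Finset.range (zdot + 1),
      (Real.Gamma (z + c₁) / (Nat.factorial z)) *
        (Real.Gamma ((zdot - z : ℕ) + c₂) / (Nat.factorial (zdot - z))) *
          p ^ z * q ^ (zdot - z) =
    iteratedDeriv (c₁ - 1)
      (fun p' : ℝ => iteratedDeriv (c₂ - 1)
        (fun q' : ℝ =>
          (p' ^ (c₁ - 1) * q' ^ (zdot + c₂) - p' ^ (zdot + c₁) * q' ^ (c₂ - 1)) / (q' - p')) q)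
      p :=
  stmt_0_general zdot c₁ c₂ hc₁ hc₂ p q hpq
end

section
/- Let z·, y1, y2 be nonnegative integers with y2 ≥ 1 and y1 ≥ 0, let α1, α2 > 0, and let z1, z2 be nonnegative integers with z1 + z2 ≤ z·. Then α1/(z·+α1) ≤ [(α1+y1)/(α2+y2−1)] · [(z2+α2+y2−1)/(z1+α1+y1)] ≤ (z·+α2)/α2. -/
/-! Write `A = α₁ + y₁` and `B = α₂ + y₂ - 1 ≥ α₂`. The ratio factors as
`A / (z₁ + A) * ((z₂ + B) / B)`; the first factor lies between `α₁ / (zdot + α₁)` and `1`,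
the second between `1` and `(zdot + α₂) / α₂`. -/

section

variable {K : Type*} [Field K] [LinearOrder K] [IsStrictOrderedRing K]

theorem div_add_self_le_div_add_self {a b c d : K} (ha : 0 < a) (hab : a ≤ b) (hc : 0 ≤ c)
    (hcd : c ≤ d) : a / (d + a) ≤ b / (c + b) := by
  rw [div_le_div_iff₀ (by linarith) (by linarith)]
  nlinarith [mul_le_mul hab hcd hc (ha.le.trans hab)]

theorem add_div_self_le_add_div_self {a b c d : K} (ha : 0 < a) (hab : a ≤ b) (hc : 0 ≤ c)
    (hcd : c ≤ d) : (c + b) / b ≤ (d + a) / a := by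
  have hb : 0 < b := ha.trans_le hab
  rw [add_div, add_div, div_self hb.ne', div_self ha.ne']
  exact add_le_add_left (div_le_div₀ (hc.trans hcd) hcd ha hab) 1

end

/-- Bounds on the privacy ratio of the multinomial-Dirichlet synthesizer with two groups. -/
theorem stmt_2 (zdot y₁ y₂ z₁ z₂ : ℕ) (hy₂ : 1 ≤ y₂) (hz : z₁ + z₂ ≤ zdot)
    (α₁ α₂ : ℝ) (hα₁ : 0 < α₁) (hα₂ : 0 < α₂) :
    α₁ / (zdot + α₁) ≤
        ((α₁ + y₁) / (α₂ + y₂ - 1)) * ((z₂ + α₂ + y₂ - 1) / (z₁ + α₁ + y₁)) ∧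
      ((α₁ + y₁) / (α₂ + y₂ - 1)) * ((z₂ + α₂ + y₂ - 1) / (z₁ + α₁ + y₁)) ≤
        (zdot + α₂) / α₂ := by
  have hy₂' : (1 : ℝ) ≤ y₂ := by exact_mod_cast hy₂
  have hz₁ : (z₁ : ℝ) ≤ zdot := by exact_mod_cast (Nat.le_add_right z₁ z₂).trans hz
  have hz₂ : (z₂ : ℝ) ≤ zdot := by exact_mod_cast (Nat.le_add_left z₂ z₁).trans hz
  have hA : α₁ ≤ α₁ + y₁ := le_add_of_nonneg_right (Nat.cast_nonneg y₁)
  have hB : α₂ ≤ α₂ + y₂ - 1 := by linarith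
  have hB₀ : 0 < α₂ + y₂ - 1 := hα₂.trans_le hB
  have hfactor : (α₁ + y₁) / (α₂ + y₂ - 1) * ((z₂ + α₂ + y₂ - 1) / (z₁ + α₁ + y₁)) =
      (α₁ + y₁) / (z₁ + (α₁ + y₁)) * ((z₂ + (α₂ + y₂ - 1)) / (α₂ + y₂ - 1)) := by
    ring
  rw [hfactor]
  have hfirst_le_one : (α₁ + y₁) / (z₁ + (α₁ + y₁)) ≤ 1 :=
    (div_le_one (by positivity)).2 (le_add_of_nonneg_left (Nat.cast_nonneg z₁))
  have hone_le_second : 1 ≤ (z₂ + (α₂ + y₂ - 1)) / (α₂ + y₂ - 1) :=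
    (one_le_div hB₀).2 (le_add_of_nonneg_left (Nat.cast_nonneg z₂))
  constructor
  · calc α₁ / (zdot + α₁) ≤ (α₁ + y₁) / (z₁ + (α₁ + y₁)) :=
          div_add_self_le_div_add_self hα₁ hA (Nat.cast_nonneg z₁) hz₁
      _ ≤ _ := le_mul_of_one_le_right (by positivity) hone_le_second
  · calc _ ≤ (z₂ + (α₂ + y₂ - 1)) / (α₂ + y₂ - 1) :=
          mul_le_of_le_one_left (by positivity) hfirst_le_one
      _ ≤ (zdot + α₂) / α₂ := add_div_self_le_add_div_self hα₂ hB (Nat.cast_nonneg z₂) hz₂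
end

section
/- Let z· ≥ 1 be an integer, ε > 0, and α1, α2 > 0. If min(α1, α2) ≥ z·/(exp(ε) − 1), then for all nonnegative integers y1 ≥ 1, y2 ≥ 1, z1, z2 with z1 + z2 = z·, one has |log([(α1+y1)/(α2+y2−1)] · [(z2+α2+y2−1)/(z1+α1+y1)])| ≤ ε. -/
/-!
With `A = α₁ + y₁` and `B = α₂ + y₂ - 1`, both at least `min α₁ α₂`, the ratio inside the
logarithm is `(1 + z₂ / B) / (1 + z₁ / A)`. Since `zᵢ ≤ z·`, each factor lies in
`[1, 1 + z· / min α₁ α₂] ⊆ [1, exp ε]`, so the logarithm is a difference of two numbers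
in `[0, ε]`.
-/

open Real

theorem log_one_add_div_mem_Icc {z c ε : ℝ} (hz : 0 ≤ z) (hc : 0 < c)
    (h : z / c ≤ exp ε - 1) : 0 ≤ log (1 + z / c) ∧ log (1 + z / c) ≤ ε := by
  have hpos : 0 < 1 + z / c := by positivity
  refine ⟨log_nonneg (by linarith [div_nonneg hz hc.le]), ?_⟩
  rw [log_le_iff_le_exp hpos]
  linarith

theorem div_le_exp_sub_one_of_div_le {z n α c ε : ℝ} (hε : 0 < ε) (hn : 0 ≤ n) (hz : z ≤ n)
    (hα : 0 < α) (hαc : α ≤ c) (h : n / (exp ε - 1) ≤ α) : z / c ≤ exp ε - 1 := by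
  have hE : 0 < exp ε - 1 := by simpa using hε
  calc z / c ≤ n / α := div_le_div₀ hn hz hα hαc
    _ ≤ exp ε - 1 := (div_le_comm₀ hE hα).mp h

theorem stmt_3_general (zdot : ℕ) (ε : ℝ) (hε : 0 < ε)
    (α₁ α₂ : ℝ) (hα₁ : 0 < α₁) (hα₂ : 0 < α₂)
    (hmin : zdot / (Real.exp ε - 1) ≤ min α₁ α₂) :
    ∀ y₁ y₂ z₁ z₂ : ℕ, 1 ≤ y₁ → 1 ≤ y₂ → z₁ + z₂ = zdot →
      |Real.log (((α₁ + y₁) / (α₂ + y₂ - 1)) *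
        ((z₂ + α₂ + y₂ - 1) / (z₁ + α₁ + y₁)))| ≤ ε := by
  intro y₁ y₂ z₁ z₂ hy₁ hy₂ hzsum
  have hy₁' : (1 : ℝ) ≤ y₁ := by exact_mod_cast hy₁
  have hy₂' : (1 : ℝ) ≤ y₂ := by exact_mod_cast hy₂
  have hzsum' : (z₁ : ℝ) + z₂ = zdot := by exact_mod_cast hzsum
  have hA : 0 < α₁ + y₁ := by linarith
  have hB : 0 < α₂ + y₂ - 1 := by linarith
  have hratio : (α₁ + y₁) / (α₂ + y₂ - 1) * ((z₂ + α₂ + y₂ - 1) / (z₁ + α₁ + y₁)) =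
      (1 + z₂ / (α₂ + y₂ - 1)) / (1 + z₁ / (α₁ + y₁)) := by
    field_simp
    ring
  have bound (z : ℕ) (hz : (z : ℝ) ≤ zdot) {α : ℝ} (c : ℝ) (hα : 0 < α) (hαc : α ≤ c)
      (hminα : min α₁ α₂ ≤ α) : 0 ≤ log (1 + z / c) ∧ log (1 + z / c) ≤ ε :=
    log_one_add_div_mem_Icc z.cast_nonneg (hα.trans_le hαc) <|
      div_le_exp_sub_one_of_div_le hε zdot.cast_nonneg hz hα hαc (hmin.trans hminα)
  obtain ⟨h₁, h₁ε⟩ := bound z₁ (by linarith [z₂.cast_nonneg (α := ℝ)]) (α₁ + y₁) hα₁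
    (by linarith) (min_le_left _ _)
  obtain ⟨h₂, h₂ε⟩ := bound z₂ (by linarith [z₁.cast_nonneg (α := ℝ)]) (α₂ + y₂ - 1) hα₂
    (by linarith) (min_le_right _ _)
  rw [hratio, log_div (by positivity) (by positivity)]
  exact abs_sub_le_of_nonneg_of_le h₂ h₂ε h₁ h₁ε

/-- ε-differential privacy condition for the multinomial-Dirichlet synthesizer (I = 2). -/
theorem stmt_3 (zdot : ℕ) (hz : 1 ≤ zdot) (ε : ℝ) (hε : 0 < ε)
    (α₁ α₂ : ℝ) (hα₁ : 0 < α₁) (hα₂ : 0 < α₂)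
    (hmin : zdot / (Real.exp ε - 1) ≤ min α₁ α₂) :
    ∀ y₁ y₂ z₁ z₂ : ℕ, 1 ≤ y₁ → 1 ≤ y₂ → z₁ + z₂ = zdot →
      |Real.log (((α₁ + y₁) / (α₂ + y₂ - 1)) *
        ((z₂ + α₂ + y₂ - 1) / (z₁ + α₁ + y₁)))| ≤ ε :=
  stmt_3_general zdot ε hε α₁ α₂ hα₁ hα₂ hmin
end

section
/- In the Poisson-gamma synthesizer with I = 2 and equal ratios b_1/n_1 = b_2/n_2, the conditional posterior predictive distribution p(z | y, a, b, z·) of (z_1, z_2) given z_1 + z_2 = z· is the beta-binomial / Dirichlet-multinomial distribution p(z_1) = [Γ(z·+1)/(Γ(z_1+1)Γ(z_2+1))] · [Γ(c_1+c_2)/(Γ(c_1)Γ(c_2))] · [Γ(z_1+c_1)Γ(z_2+c_2)/Γ(z·+c_1+c_2)] with c_i = y_i + a_i; i.e., it coincides with the multinomial-Dirichlet synthesizer with α_i = a_i. -/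
open Real Finset
open scoped Nat

/-! With `b₁/n₁ = b₂/n₂` both geometric ratios `qᵢ = nᵢ/(bᵢ + 2nᵢ)` coincide, so every term of
the normalising sum carries the same factor `q ^ z·`, which cancels. What is left is the Gamma
form of the Chu–Vandermonde identity: `Γ(k + c)/k! = Γ(c) · multichoose c k`, and
`multichoose (c₁ + c₂) n = ∑ multichoose c₁ i · multichoose c₂ (n - i)` follows from Vandermonde's
identity for `Ring.choose` by upper negation, `choose (-r) k = (-1)ᵏ multichoose r k`. -/

theorem Ring.multichoose_add {R : Type*} [CommRing R] [BinomialRing R] (r s : R) (n : ℕ) :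
    Ring.multichoose (r + s) n =
      ∑ ij ∈ antidiagonal n, Ring.multichoose r ij.1 * Ring.multichoose s ij.2 := by
  have h := Ring.add_choose_eq (r := -r) (s := -s) n (Commute.all _ _)
  rw [← neg_add, Ring.choose_neg'] at h
  have hsign : ∀ ij ∈ antidiagonal n, Ring.choose (-r) ij.1 * Ring.choose (-s) ij.2 =
      Int.negOnePow n • (Ring.multichoose r ij.1 * Ring.multichoose s ij.2) := by
    intro ij hij
    rw [← mem_antidiagonal.mp hij, Nat.cast_add, Int.negOnePow_add, Ring.choose_neg',
      Ring.choose_neg', smul_mul_smul_comm, mul_comm (Int.negOnePow ij.1)]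
  rw [sum_congr rfl hsign, ← smul_sum] at h
  exact (Int.negOnePow n).isUnit.smul_left_cancel.mp h

theorem Real.Gamma_add_nat_eq_ascPochhammer_mul {c : ℝ} (hc : ∀ k : ℕ, c ≠ -k) (n : ℕ) :
    Gamma (c + n) = (ascPochhammer ℝ n).eval c * Gamma c := by
  induction n with
  | zero => simp
  | succ n ih =>
    have hcn : c + n ≠ 0 := fun h => hc n (eq_neg_of_add_eq_zero_left h)
    rw [Nat.cast_succ, ← add_assoc, Gamma_add_one hcn, ih, ascPochhammer_succ_eval]
    ring

theorem Real.Gamma_nat_add_div_factorial {c : ℝ} (hc : ∀ k : ℕ, c ≠ -k) (n : ℕ) :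
    Gamma (n + c) / n ! = Ring.multichoose c n * Gamma c := by
  have h := Ring.factorial_nsmul_multichoose_eq_ascPochhammer c n
  rw [Polynomial.ascPochhammer_smeval_eq_eval, nsmul_eq_mul] at h
  rw [add_comm, Gamma_add_nat_eq_ascPochhammer_mul hc, ← h]
  field_simp

theorem Real.sum_range_Gamma_div_factorial_mul {c₁ c₂ : ℝ} (hc₁ : 0 < c₁) (hc₂ : 0 < c₂)
    (n : ℕ) :
    ∑ k ∈ range (n + 1), Gamma (k + c₁) / k ! * (Gamma ((n - k : ℕ) + c₂) / (n - k)!) =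
      Gamma c₁ * Gamma c₂ / Gamma (c₁ + c₂) * (Gamma (n + (c₁ + c₂)) / n !) := by
  have ne_neg_natCast : ∀ c : ℝ, 0 < c → ∀ k : ℕ, c ≠ -k := fun c hc k h => by
    have : (0 : ℝ) ≤ k := k.cast_nonneg
    linarith
  simp only [Gamma_nat_add_div_factorial (ne_neg_natCast _ hc₁),
    Gamma_nat_add_div_factorial (ne_neg_natCast _ hc₂),
    Gamma_nat_add_div_factorial (ne_neg_natCast _ (add_pos hc₁ hc₂)), Ring.multichoose_add,
    Nat.sum_antidiagonal_eq_sum_range_succ_mk]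
  have hG : Gamma (c₁ + c₂) ≠ 0 := (Gamma_pos_of_pos (add_pos hc₁ hc₂)).ne'
  rw [Nat.succ_eq_add_one, sum_mul, mul_sum]
  refine sum_congr rfl fun k _ => ?_
  field_simp

theorem div_sum_range_mul_geom_eq {f g : ℕ → ℝ} {q : ℝ} (hq : q ≠ 0) {n z₁ z₂ : ℕ}
    (hz : z₁ + z₂ = n) :
    f z₁ * q ^ z₁ * (g z₂ * q ^ z₂) /
        ∑ k ∈ range (n + 1), f k * q ^ k * (g (n - k) * q ^ (n - k)) =
      f z₁ * g z₂ / ∑ k ∈ range (n + 1), f k * g (n - k) := by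
  have hsum : ∑ k ∈ range (n + 1), f k * q ^ k * (g (n - k) * q ^ (n - k)) =
      (∑ k ∈ range (n + 1), f k * g (n - k)) * q ^ n := by
    rw [sum_mul]
    refine sum_congr rfl fun k hk => ?_
    rw [← Nat.add_sub_cancel' (Nat.lt_succ_iff.mp (mem_range.mp hk)), pow_add]
    simp only [Nat.add_sub_cancel_left]
    ring
  calc f z₁ * q ^ z₁ * (g z₂ * q ^ z₂) /
        ∑ k ∈ range (n + 1), f k * q ^ k * (g (n - k) * q ^ (n - k))
      = f z₁ * g z₂ * q ^ n / ((∑ k ∈ range (n + 1), f k * g (n - k)) * q ^ n) := by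
        rw [hsum, ← hz, pow_add]
        ring
    _ = f z₁ * g z₂ / ∑ k ∈ range (n + 1), f k * g (n - k) :=
        mul_div_mul_right _ _ (pow_ne_zero n hq)

/-- With equal ratios `b₁/n₁ = b₂/n₂`, the constrained Poisson-gamma posterior predictive
of `(z₁, z₂)` given `z₁ + z₂ = z·` is the beta-binomial (Dirichlet-multinomial)
distribution with parameters `cᵢ = yᵢ + aᵢ`. -/
theorem stmt_12 (n₁ n₂ b₁ b₂ a₁ a₂ : ℝ)
    (hn₁ : 0 < n₁) (hn₂ : 0 < n₂) (hb₁ : 0 < b₁) (hb₂ : 0 < b₂)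
    (ha₁ : 0 < a₁) (ha₂ : 0 < a₂) (heq : b₁ / n₁ = b₂ / n₂)
    (y₁ y₂ zdot z₁ z₂ : ℕ) (hz : z₁ + z₂ = zdot) :
    ((Real.Gamma (z₁ + y₁ + a₁) / (Nat.factorial z₁)) * (n₁ / (b₁ + 2 * n₁)) ^ z₁ *
          ((Real.Gamma (z₂ + y₂ + a₂) / (Nat.factorial z₂)) * (n₂ / (b₂ + 2 * n₂)) ^ z₂)) /
        (∑ z ∈ Finset.range (zdot + 1),
          (Real.Gamma (z + y₁ + a₁) / (Nat.factorial z)) * (n₁ / (b₁ + 2 * n₁)) ^ z *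
            ((Real.Gamma ((zdot - z : ℕ) + y₂ + a₂) / (Nat.factorial (zdot - z))) *
              (n₂ / (b₂ + 2 * n₂)) ^ (zdot - z))) =
      (Real.Gamma (zdot + 1) / (Real.Gamma (z₁ + 1) * Real.Gamma (z₂ + 1))) *
        (Real.Gamma ((y₁ + a₁) + (y₂ + a₂)) /
            (Real.Gamma (y₁ + a₁) * Real.Gamma (y₂ + a₂))) *
          (Real.Gamma (z₁ + y₁ + a₁) * Real.Gamma (z₂ + y₂ + a₂) /
            Real.Gamma (zdot + ((y₁ + a₁) + (y₂ + a₂)))) := by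
  have hq : n₂ / (b₂ + 2 * n₂) = n₁ / (b₁ + 2 * n₁) := by
    rw [div_eq_div_iff (by positivity) (by positivity)] at heq ⊢
    linarith
  have hc₁ : 0 < (y₁ : ℝ) + a₁ := by positivity
  have hc₂ : 0 < (y₂ : ℝ) + a₂ := by positivity
  rw [hq]
  refine (div_sum_range_mul_geom_eq (f := fun k => Gamma (k + y₁ + a₁) / k !)
    (g := fun k => Gamma (k + y₂ + a₂) / k !) (by positivity) hz).trans ?_
  simp only [add_assoc _ (y₁ : ℝ) a₁, add_assoc _ (y₂ : ℝ) a₂]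
  rw [sum_range_Gamma_div_factorial_mul hc₁ hc₂, Gamma_nat_eq_factorial, Gamma_nat_eq_factorial,
    Gamma_nat_eq_factorial, ← hz]
  have hΓ₁ := Gamma_pos_of_pos hc₁
  have hΓ₂ := Gamma_pos_of_pos hc₂
  have hΓ₁₂ := Gamma_pos_of_pos (add_pos hc₁ hc₂)
  have hΓ : 0 < Gamma ((z₁ + z₂ : ℕ) + (y₁ + a₁ + (y₂ + a₂))) := Gamma_pos_of_pos (by positivity)
  field_simp
end

section
/- Let ε > 0 and z· be a positive integer, and suppose α ≥ z·/(e^ε − 1). Then for every pair of nonnegative integer vectors y, x of length I ≥ 2 with ∑ y_i = ∑ x_i, ‖x − y‖₁ = 2, and every nonnegative integer vector z with ∑ z_i = z·, the multinomial-Dirichlet posterior predictive probabilities with α_i = α satisfy e^{−ε} ≤ p(z | y, α)/p(z | x, α) ≤ e^ε. -/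
open Real Finset

/-- The Dirichlet-multinomial posterior predictive with common prior parameter `α`. -/
noncomputable def dmPredVec {I : ℕ} (α : ℝ) (y z : Fin I → ℕ) : ℝ :=
  ((Nat.factorial (∑ i, z i) : ℝ) / ∏ i, (Nat.factorial (z i) : ℝ)) *
    (Real.Gamma (∑ i, ((y i : ℝ) + α)) / ∏ i, Real.Gamma ((y i : ℝ) + α)) *
      ((∏ i, Real.Gamma ((z i : ℝ) + (y i : ℝ) + α)) /
        Real.Gamma (∑ i, ((z i : ℝ) + (y i : ℝ) + α)))

/-! Neighbouring datasets are `x = w + e_j`, `y = w + e_k`. By `Γ (s + 1) = s Γ s`, adding one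
count to cell `j` multiplies the predictive by a factor independent of `j` times
`(z_j + w_j + α) / (w_j + α)`, so `p(z | y) / p(z | x)` is a quotient of two such factors. Each
lies in `[1, e^ε]` because `z_j ≤ z· ≤ α (e^ε - 1)`. -/

open Function

@[to_additive]
theorem Fintype.prod_update_mul_eq {ι β M : Type*} [Fintype ι] [DecidableEq ι] [CommMonoid M]
    (f : ι → β → M) (w : ι → β) (j : ι) (b : β) :
    (∏ i, f i (update w j b i)) * f j (w j) = (∏ i, f i (w i)) * f j b := by
  rw [Fintype.prod_eq_mul_prod_compl j, Fintype.prod_eq_mul_prod_compl j (fun i ↦ f i (w i)),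
    update_self, Finset.prod_congr rfl fun i hi ↦ by rw [update_of_ne (by simpa using hi)]]
  ac_rfl

theorem Fintype.exists_eq_single_of_sum_eq_one {ι : Type*} [Fintype ι] [DecidableEq ι]
    {f : ι → ℕ} (h : ∑ i, f i = 1) : ∃ j, f = Pi.single j 1 := by
  obtain ⟨j, hj⟩ := (Finsupp.sum_eq_one_iff (Finsupp.equivFunOnFinite.symm f)).1 <| by
    rwa [Finsupp.sum_fintype _ _ fun _ ↦ rfl]
  exact ⟨j, by simpa [Finsupp.single_eq_pi_single] using congrArg (⇑) hj⟩

theorem update_succ_eq_add_single {ι : Type*} [DecidableEq ι] (w : ι → ℕ) (j : ι) :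
    update w j (w j + 1) = w + Pi.single j 1 := by
  ext i
  rcases eq_or_ne i j with rfl | h <;> simp [*]

theorem exists_update_of_sum_eq_of_sum_abs_sub_eq_two {ι : Type*} [Fintype ι] [DecidableEq ι]
    {x y : ι → ℕ} (hsum : ∑ i, y i = ∑ i, x i)
    (hnbr : ∑ i, |(x i : ℤ) - (y i : ℤ)| = 2) :
    ∃ w j k, x = update w j (w j + 1) ∧ y = update w k (w k + 1) := by
  set w := x ⊓ y
  have hdiff : ∀ i, ((x i - w i : ℕ) : ℤ) - (y i - w i : ℕ) = x i - y i := fun i ↦ by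
    simp only [w, Pi.inf_apply]; omega
  have habs : ∀ i, ((x i - w i : ℕ) : ℤ) + (y i - w i : ℕ) = |(x i : ℤ) - y i| := fun i ↦ by
    simp only [w, Pi.inf_apply]
    rcases le_total (x i) (y i) with h | h
    · rw [abs_of_nonpos (by omega)]; omega
    · rw [abs_of_nonneg (by omega)]; omega
  have hsumZ : ∑ i, (x i : ℤ) = ∑ i, (y i : ℤ) := by exact_mod_cast hsum.symm
  have hsub : ∑ i, ((x i - w i : ℕ) : ℤ) - ∑ i, ((y i - w i : ℕ) : ℤ) = 0 := by
    rw [← sum_sub_distrib, sum_congr rfl fun i _ ↦ hdiff i, sum_sub_distrib, hsumZ, sub_self]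
  have hadd : ∑ i, ((x i - w i : ℕ) : ℤ) + ∑ i, ((y i - w i : ℕ) : ℤ) = 2 := by
    rw [← sum_add_distrib, sum_congr rfl fun i _ ↦ habs i, hnbr]
  rw [← Nat.cast_sum, ← Nat.cast_sum] at hsub hadd
  obtain ⟨j, hj⟩ := Fintype.exists_eq_single_of_sum_eq_one (f := x - w) <| by
    simp only [Pi.sub_apply]; omega
  obtain ⟨k, hk⟩ := Fintype.exists_eq_single_of_sum_eq_one (f := y - w) <| by
    simp only [Pi.sub_apply]; omega
  refine ⟨w, j, k, ?_, ?_⟩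
  · rw [update_succ_eq_add_single, ← hj, add_tsub_cancel_of_le inf_le_left]
  · rw [update_succ_eq_add_single, ← hk, add_tsub_cancel_of_le inf_le_right]

-- For `I = 0` the empty sums give the junk value `Γ 0 = 0`.
theorem dmPredVec_pos {I : ℕ} [NeZero I] {α : ℝ} (hα : 0 < α) (y z : Fin I → ℕ) :
    0 < dmPredVec α y z := by
  unfold dmPredVec; positivity

theorem dmPredVec_update_succ {I : ℕ} {α : ℝ} (hα : 0 < α) (w z : Fin I → ℕ) (j : Fin I) :
    dmPredVec α (update w j (w j + 1)) z =
      dmPredVec α w z * ((∑ i, ((w i : ℝ) + α)) / ∑ i, ((z i : ℝ) + (w i : ℝ) + α)) *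
        (((z j : ℝ) + (w j : ℝ) + α) / ((w j : ℝ) + α)) := by
  have hA := Fintype.sum_update_add_eq (fun _ (n : ℕ) ↦ (n : ℝ) + α) w j (w j + 1)
  have hB := Fintype.sum_update_add_eq (fun i (n : ℕ) ↦ (z i : ℝ) + (n : ℝ) + α) w j (w j + 1)
  have hP := Fintype.prod_update_mul_eq (fun _ (n : ℕ) ↦ Gamma ((n : ℝ) + α)) w j (w j + 1)
  have hQ :=
    Fintype.prod_update_mul_eq (fun i (n : ℕ) ↦ Gamma ((z i : ℝ) + (n : ℝ) + α)) w j (w j + 1)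
  simp only [Nat.cast_add, Nat.cast_one] at hA hB hP hQ
  rw [show (w j : ℝ) + 1 + α = (w j + α) + 1 by ring, Gamma_add_one (by positivity)] at hP
  rw [show (z j : ℝ) + (w j + 1) + α = (z j + w j + α) + 1 by ring,
    Gamma_add_one (by positivity)] at hQ
  have hA' : ∑ i, ((update w j (w j + 1) i : ℝ) + α) = ∑ i, ((w i : ℝ) + α) + 1 := by linarith
  have hB' : ∑ i, ((z i : ℝ) + (update w j (w j + 1) i : ℝ) + α) =
      ∑ i, ((z i : ℝ) + (w i : ℝ) + α) + 1 := by linarith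
  have hP' : ∏ i, Gamma ((update w j (w j + 1) i : ℝ) + α) =
      (∏ i, Gamma ((w i : ℝ) + α)) * ((w j : ℝ) + α) :=
    (mul_left_inj' (Gamma_pos_of_pos (by positivity : (0 : ℝ) < w j + α)).ne').1
      (by rw [hP]; ring)
  have hQ' : ∏ i, Gamma ((z i : ℝ) + (update w j (w j + 1) i : ℝ) + α) =
      (∏ i, Gamma ((z i : ℝ) + (w i : ℝ) + α)) * ((z j : ℝ) + (w j : ℝ) + α) :=
    (mul_left_inj' (Gamma_pos_of_pos (by positivity : (0 : ℝ) < z j + w j + α)).ne').1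
      (by rw [hQ]; ring)
  have : NeZero I := NeZero.of_pos j.pos
  unfold dmPredVec
  rw [hA', hB', hP', hQ', Gamma_add_one (by positivity), Gamma_add_one (by positivity)]
  field_simp

theorem dmPredVec_update_succ_div {I : ℕ} {α : ℝ} (hα : 0 < α) (w z : Fin I → ℕ) (j k : Fin I) :
    dmPredVec α (update w k (w k + 1)) z / dmPredVec α (update w j (w j + 1)) z =
      (((z k : ℝ) + (w k : ℝ) + α) / ((w k : ℝ) + α)) /
        (((z j : ℝ) + (w j : ℝ) + α) / ((w j : ℝ) + α)) := by
  have : NeZero I := NeZero.of_pos j.pos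
  rw [dmPredVec_update_succ hα, dmPredVec_update_succ hα, mul_div_mul_left]
  have := dmPredVec_pos hα w z
  positivity

theorem add_add_div_add_mem_Icc_one_exp {a b t ε : ℝ} (ha : 0 < a) (hb : 0 ≤ b) (ht : 0 ≤ t)
    (hta : t ≤ a * (exp ε - 1)) :
    (t + b + a) / (b + a) ∈ Set.Icc 1 (exp ε) := by
  have hba : 0 < b + a := by positivity
  rw [Set.mem_Icc, one_le_div hba, div_le_iff₀ hba]
  constructor <;> nlinarith

theorem div_mem_Icc_exp_neg_exp {a b ε : ℝ} (ha : a ∈ Set.Icc 1 (exp ε))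
    (hb : b ∈ Set.Icc 1 (exp ε)) : a / b ∈ Set.Icc (exp (-ε)) (exp ε) := by
  obtain ⟨ha1, hae⟩ := ha
  obtain ⟨hb1, hbe⟩ := hb
  refine ⟨?_, (div_le_self (by linarith) hb1).trans hae⟩
  calc exp (-ε) = 1 / exp ε := by rw [exp_neg, one_div]
    _ ≤ a / b := div_le_div₀ (by linarith) ha1 (by linarith) hbe

theorem stmt_14_general (ε : ℝ) (hε : 0 < ε) (zdot : ℕ) (hz : 0 < zdot)
    (α : ℝ) (hα : (zdot : ℝ) / (Real.exp ε - 1) ≤ α)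
    (I : ℕ) (y x z : Fin I → ℕ)
    (hsum : ∑ i, y i = ∑ i, x i)
    (hnbr : ∑ i, |(x i : ℤ) - (y i : ℤ)| = 2)
    (hzsum : ∑ i, z i = zdot) :
    Real.exp (-ε) ≤ dmPredVec α y z / dmPredVec α x z ∧
      dmPredVec α y z / dmPredVec α x z ≤ Real.exp ε := by
  have hexp : 0 < exp ε - 1 := by linarith [add_one_lt_exp hε.ne']
  have hα0 : 0 < α := (div_pos (by exact_mod_cast hz) hexp).trans_le hα
  have hzα : (zdot : ℝ) ≤ α * (exp ε - 1) := (div_le_iff₀ hexp).1 hα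
  have hz_le : ∀ i, (z i : ℝ) ≤ zdot := fun i ↦ by
    rw [← hzsum]; exact_mod_cast single_le_sum (fun i _ ↦ Nat.zero_le (z i)) (mem_univ i)
  obtain ⟨w, j, k, rfl, rfl⟩ := exists_update_of_sum_eq_of_sum_abs_sub_eq_two hsum hnbr
  have hbound := fun i ↦
    add_add_div_add_mem_Icc_one_exp hα0 (w i).cast_nonneg (z i).cast_nonneg ((hz_le i).trans hzα)
  rw [dmPredVec_update_succ_div hα0]
  exact div_mem_Icc_exp_neg_exp (hbound k) (hbound j)

/-- ε-differential privacy of the multinomial-Dirichlet synthesizer with common prior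
parameter `α ≥ z·/(e^ε − 1)`, for neighboring datasets. -/
theorem stmt_14 (ε : ℝ) (hε : 0 < ε) (zdot : ℕ) (hz : 0 < zdot)
    (α : ℝ) (hα : (zdot : ℝ) / (Real.exp ε - 1) ≤ α)
    (I : ℕ) (hI : 2 ≤ I) (y x z : Fin I → ℕ)
    (hsum : ∑ i, y i = ∑ i, x i)
    (hnbr : ∑ i, |(x i : ℤ) - (y i : ℤ)| = 2)
    (hzsum : ∑ i, z i = zdot) :
    Real.exp (-ε) ≤ dmPredVec α y z / dmPredVec α x z ∧
      dmPredVec α y z / dmPredVec α x z ≤ Real.exp ε :=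
  stmt_14_general ε hε zdot hz α hα I y x z hsum hnbr hzsum
end

section
/- For the two-group constrained Poisson-gamma synthesizer, the privacy ratio factorizes as p(z|y,a,b)/p(z|x,a,b) = [C(x,n,a,b,z·)/C(y,n,a,b,z·)] · [Γ(z_1+y_1+a_1)/Γ(z_1+x_1+a_1)] · [Γ(z_2+y_2+a_2)/Γ(z_2+x_2+a_2)], where C(y,n,a,b,z·) = ∑_{z=0}^{z·} [Γ(z+y_1+a_1)/z!][Γ(z·−z+y_2+a_2)/(z·−z)!] r^z with r = r_1(n,b); in particular the geometric factors (n_i/(b_i+2n_i))^{z_i} cancel in the ratio. -/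
open Real Finset

/-- Equation (8): the conditional posterior predictive of `(z₁, z₂)` with `z₁ + z₂ = z·`
under the two-group Poisson-gamma synthesizer. -/
noncomputable def pgPred (n₁ n₂ b₁ b₂ a₁ a₂ : ℝ) (y₁ y₂ zdot z₁ z₂ : ℕ) : ℝ :=
  ((Real.Gamma (z₁ + y₁ + a₁) / (Nat.factorial z₁)) * (n₁ / (b₁ + 2 * n₁)) ^ z₁ *
      ((Real.Gamma (z₂ + y₂ + a₂) / (Nat.factorial z₂)) * (n₂ / (b₂ + 2 * n₂)) ^ z₂)) /
    (∑ z ∈ Finset.range (zdot + 1),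
      (Real.Gamma (z + y₁ + a₁) / (Nat.factorial z)) * (n₁ / (b₁ + 2 * n₁)) ^ z *
        ((Real.Gamma ((zdot - z : ℕ) + y₂ + a₂) / (Nat.factorial (zdot - z))) *
          (n₂ / (b₂ + 2 * n₂)) ^ (zdot - z)))

/-- Equation (9): the normalizing constant `C(y, n, a, b, z·)` with
`r = r₁(n,b) = (b₂/n₂ + 2)/(b₁/n₁ + 2)`. -/
noncomputable def pgC (n₁ n₂ b₁ b₂ a₁ a₂ : ℝ) (y₁ y₂ zdot : ℕ) : ℝ :=
  ∑ z ∈ Finset.range (zdot + 1),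
    (Real.Gamma (z + y₁ + a₁) / (Nat.factorial z)) *
      (Real.Gamma ((zdot - z : ℕ) + y₂ + a₂) / (Nat.factorial (zdot - z))) *
        ((b₂ / n₂ + 2) / (b₁ / n₁ + 2)) ^ z

/-! Since `n₁/(b₁+2n₁) = r · n₂/(b₂+2n₂)`, the geometric weights of every term of (8), in the
numerator and in the normaliser alike, equal `r^{z₁} (n₂/(b₂+2n₂))^{z·}`. Cancelling the common
factor `(n₂/(b₂+2n₂))^{z·}` gives `p(z|y) = Γ(z₁+y₁+a₁)/z₁! · Γ(z₂+y₂+a₂)/z₂! · r^{z₁} / C(y)`,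
and in the ratio for two datasets the factor `r^{z₁}/(z₁! z₂!)` cancels as well. -/

section

variable {n₁ n₂ b₁ b₂ : ℝ}

lemma geom_weight_eq_mul (hn₁ : n₁ ≠ 0) (hn₂ : n₂ ≠ 0) (hb₂ : b₂ + 2 * n₂ ≠ 0) :
    n₁ / (b₁ + 2 * n₁) = (b₂ / n₂ + 2) / (b₁ / n₁ + 2) * (n₂ / (b₂ + 2 * n₂)) := by
  field_simp

variable (a₁ a₂ : ℝ) (y₁ y₂ zdot : ℕ)

lemma pgPred_denom_eq (hn₁ : n₁ ≠ 0) (hn₂ : n₂ ≠ 0) (hb₂ : b₂ + 2 * n₂ ≠ 0) :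
    ∑ z ∈ Finset.range (zdot + 1),
        (Real.Gamma (z + y₁ + a₁) / (Nat.factorial z)) * (n₁ / (b₁ + 2 * n₁)) ^ z *
          ((Real.Gamma ((zdot - z : ℕ) + y₂ + a₂) / (Nat.factorial (zdot - z))) *
            (n₂ / (b₂ + 2 * n₂)) ^ (zdot - z)) =
      (n₂ / (b₂ + 2 * n₂)) ^ zdot * pgC n₁ n₂ b₁ b₂ a₁ a₂ y₁ y₂ zdot := by
  rw [pgC, Finset.mul_sum]
  refine Finset.sum_congr rfl fun z hz => ?_
  rw [geom_weight_eq_mul hn₁ hn₂ hb₂, mul_pow,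
    ← pow_mul_pow_sub (n₂ / (b₂ + 2 * n₂)) (Nat.lt_succ_iff.mp (Finset.mem_range.mp hz))]
  ring

lemma pgPred_eq_div_pgC (hn₁ : n₁ ≠ 0) (hn₂ : n₂ ≠ 0) (hb₂ : b₂ + 2 * n₂ ≠ 0)
    {z₁ z₂ : ℕ} (hz : z₁ + z₂ = zdot) :
    pgPred n₁ n₂ b₁ b₂ a₁ a₂ y₁ y₂ zdot z₁ z₂ =
      Real.Gamma (z₁ + y₁ + a₁) / (Nat.factorial z₁) *
          (Real.Gamma (z₂ + y₂ + a₂) / (Nat.factorial z₂)) *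
          ((b₂ / n₂ + 2) / (b₁ / n₁ + 2)) ^ z₁ /
        pgC n₁ n₂ b₁ b₂ a₁ a₂ y₁ y₂ zdot := by
  have hP : (n₂ / (b₂ + 2 * n₂)) ^ zdot ≠ 0 := pow_ne_zero _ (div_ne_zero hn₂ hb₂)
  rw [pgPred, pgPred_denom_eq a₁ a₂ y₁ y₂ zdot hn₁ hn₂ hb₂, div_mul_eq_div_div]
  congr 1
  rw [div_eq_iff hP, geom_weight_eq_mul hn₁ hn₂ hb₂, mul_pow, ← hz, pow_add]
  ring

end

theorem stmt_19_general (n₁ n₂ b₁ b₂ a₁ a₂ : ℝ)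
    (hn₁ : 0 < n₁) (hn₂ : 0 < n₂) (hb₁ : 0 < b₁) (hb₂ : 0 < b₂)
    (y₁ y₂ x₁ x₂ zdot z₁ z₂ : ℕ)
    (hz : z₁ + z₂ = zdot) :
    pgPred n₁ n₂ b₁ b₂ a₁ a₂ y₁ y₂ zdot z₁ z₂ /
        pgPred n₁ n₂ b₁ b₂ a₁ a₂ x₁ x₂ zdot z₁ z₂ =
      (pgC n₁ n₂ b₁ b₂ a₁ a₂ x₁ x₂ zdot / pgC n₁ n₂ b₁ b₂ a₁ a₂ y₁ y₂ zdot) *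
        (Real.Gamma (z₁ + y₁ + a₁) / Real.Gamma (z₁ + x₁ + a₁)) *
          (Real.Gamma (z₂ + y₂ + a₂) / Real.Gamma (z₂ + x₂ + a₂)) := by
  have hn₁' := hn₁.ne'
  have hn₂' := hn₂.ne'
  have hb₂' : b₂ + 2 * n₂ ≠ 0 := by positivity
  set K : ℝ := ((b₂ / n₂ + 2) / (b₁ / n₁ + 2)) ^ z₁ / (z₁.factorial * z₂.factorial)
  have hK : K ≠ 0 := by positivity
  have hweight (g₁ g₂ : ℝ) :
      g₁ / z₁.factorial * (g₂ / z₂.factorial) * ((b₂ / n₂ + 2) / (b₁ / n₁ + 2)) ^ z₁ =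
        K * (g₁ * g₂) := by
    ring
  rw [pgPred_eq_div_pgC a₁ a₂ y₁ y₂ zdot hn₁' hn₂' hb₂' hz,
    pgPred_eq_div_pgC a₁ a₂ x₁ x₂ zdot hn₁' hn₂' hb₂' hz, hweight, hweight, div_div_div_eq,
    mul_comm _ (pgC _ _ _ _ _ _ x₁ x₂ zdot), mul_div_mul_comm, mul_div_mul_left _ _ hK,
    mul_div_mul_comm, mul_assoc]

/-- The privacy ratio of the two-group constrained Poisson-gamma synthesizer factorizes
into a ratio of normalizing constants and a product of gamma-function ratios: the
geometric factors `(nᵢ/(bᵢ+2nᵢ))^{zᵢ}` cancel. -/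
theorem stmt_19 (n₁ n₂ b₁ b₂ a₁ a₂ : ℝ)
    (hn₁ : 0 < n₁) (hn₂ : 0 < n₂) (hb₁ : 0 < b₁) (hb₂ : 0 < b₂)
    (ha₁ : 0 < a₁) (ha₂ : 0 < a₂)
    (y₁ y₂ x₁ x₂ zdot z₁ z₂ : ℕ)
    (hsum : x₁ + x₂ = y₁ + y₂)
    (hnbr : |(x₁ : ℤ) - (y₁ : ℤ)| + |(x₂ : ℤ) - (y₂ : ℤ)| = 2)
    (hz : z₁ + z₂ = zdot) :
    pgPred n₁ n₂ b₁ b₂ a₁ a₂ y₁ y₂ zdot z₁ z₂ /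
        pgPred n₁ n₂ b₁ b₂ a₁ a₂ x₁ x₂ zdot z₁ z₂ =
      (pgC n₁ n₂ b₁ b₂ a₁ a₂ x₁ x₂ zdot / pgC n₁ n₂ b₁ b₂ a₁ a₂ y₁ y₂ zdot) *
        (Real.Gamma (z₁ + y₁ + a₁) / Real.Gamma (z₁ + x₁ + a₁)) *
          (Real.Gamma (z₂ + y₂ + a₂) / Real.Gamma (z₂ + x₂ + a₂)) :=
  stmt_19_general n₁ n₂ b₁ b₂ a₁ a₂ hn₁ hn₂ hb₁ hb₂ y₁ y₂ x₁ x₂ zdot z₁ z₂ hz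
end
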